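/- The polynomials q_n in variables y_1, y_2, ..., defined by q_0 = 1 and the recursion q_n = (1/n) ∑_{k=1}^{n} y_k q_{n-k}, admit the closed-form expression q_n = ∑_{j_1 + 2j_2 + ... + n j_n = n} ∏_{k=1}^{n} (1/j_k!) (y_k / k)^{j_k}. -/

import Mathlib

/-!
Write `w(P) = ∏ₖ (1/jₖ!) (yₖ/k)^{jₖ}` for the weight of a partition `P` with multiplicities `jₖ`.
Adding one part `k` to a partition `P'` of `n - k` multiplies its weight by `yₖ / (k (jₖ + 1))`,
so `∑_{P ⊢ n} k jₖ(P) w(P) = yₖ ∑_{P' ⊢ n-k} w(P')`. Summing over `k` and using `∑ₖ k jₖ = n`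
shows that `∑_{P ⊢ n} w(P)` satisfies the recursion defining `qₙ`.
-/

open MvPolynomial Finset

noncomputable def cycleFactor (k j : ℕ) : MvPolynomial ℕ ℚ :=
  C (1 / (j.factorial : ℚ)) * (C (1 / (k : ℚ)) * X k) ^ j

noncomputable def cycleWeight (s : Multiset ℕ) : MvPolynomial ℕ ℚ :=
  ∏ k ∈ s.toFinset, cycleFactor k (s.count k)

@[simp]
lemma cycleFactor_zero_right (k : ℕ) : cycleFactor k 0 = 1 := by
  simp [cycleFactor]

lemma cycleFactor_succ {k : ℕ} (hk : k ≠ 0) (j : ℕ) :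
    C ((k * (j + 1) : ℕ) : ℚ) * cycleFactor k (j + 1) = X k * cycleFactor k j := by
  have hscalar : ((k * (j + 1) : ℕ) : ℚ) * (1 / ((j + 1).factorial : ℚ)) * (1 / (k : ℚ))
      = 1 / (j.factorial : ℚ) := by
    rw [Nat.factorial_succ]
    push_cast
    field_simp
  calc C ((k * (j + 1) : ℕ) : ℚ) * cycleFactor k (j + 1)
      = C (((k * (j + 1) : ℕ) : ℚ) * (1 / ((j + 1).factorial : ℚ)) * (1 / (k : ℚ))) * X k *
          (C (1 / (k : ℚ)) * X k) ^ j := by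
        simp only [cycleFactor, C_mul, pow_succ]
        ring
    _ = X k * cycleFactor k j := by
        rw [hscalar, cycleFactor]
        ring

lemma prod_cycleFactor_eq_cycleWeight {s : Multiset ℕ} {S : Finset ℕ} (h : s.toFinset ⊆ S) :
    ∏ k ∈ S, cycleFactor k (s.count k) = cycleWeight s := by
  refine (prod_subset h fun k _ hk => ?_).symm
  rw [Multiset.count_eq_zero_of_notMem (by simpa using hk), cycleFactor_zero_right]

lemma cycleWeight_cons {k : ℕ} (hk : k ≠ 0) (s : Multiset ℕ) :
    C ((k * (s.count k + 1) : ℕ) : ℚ) * cycleWeight (k ::ₘ s) = X k * cycleWeight s := by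
  have hsub : s.toFinset ⊆ (k ::ₘ s).toFinset :=
    Multiset.toFinset_subset.mpr (Multiset.subset_cons s k)
  have hmem : k ∈ (k ::ₘ s).toFinset := by simp
  have hrest : ∏ l ∈ (k ::ₘ s).toFinset.erase k, cycleFactor l ((k ::ₘ s).count l)
      = ∏ l ∈ (k ::ₘ s).toFinset.erase k, cycleFactor l (s.count l) :=
    prod_congr rfl fun l hl => by rw [Multiset.count_cons_of_ne (ne_of_mem_erase hl)]
  rw [← prod_cycleFactor_eq_cycleWeight hsub, cycleWeight, ← mul_prod_erase _ _ hmem,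
    ← mul_prod_erase _ _ hmem, hrest, Multiset.count_cons_self, ← mul_assoc,
    cycleFactor_succ hk, mul_assoc]

lemma Multiset.sum_mul_count_eq_sum {s : Multiset ℕ} {S : Finset ℕ} (h : s.toFinset ⊆ S) :
    ∑ k ∈ S, k * s.count k = s.sum := by
  rw [Finset.sum_multiset_count, sum_subset h fun k _ hk => by simp_all]
  simp [mul_comm]

lemma Nat.Partition.parts_toFinset_subset_Icc {n : ℕ} (P : n.Partition) :
    P.parts.toFinset ⊆ Icc 1 n := fun _ hi =>
  mem_Icc.mpr ⟨P.parts_pos (Multiset.mem_toFinset.mp hi),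
    P.le_of_mem_parts (Multiset.mem_toFinset.mp hi)⟩

lemma Nat.Partition.sum_mul_count_eq {n : ℕ} (P : n.Partition) :
    ∑ k ∈ Icc 1 n, k * P.parts.count k = n := by
  rw [Multiset.sum_mul_count_eq_sum P.parts_toFinset_subset_Icc, P.parts_sum]

lemma sum_count_mul_cycleWeight {n k : ℕ} (hk : 1 ≤ k) (hkn : k ≤ n) :
    ∑ P : n.Partition, C ((k * P.parts.count k : ℕ) : ℚ) * cycleWeight P.parts
      = X k * ∑ P : (n - k).Partition, cycleWeight P.parts := by
  set F : n.Partition → MvPolynomial ℕ ℚ :=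
    fun P => C ((k * P.parts.count k : ℕ) : ℚ) * cycleWeight P.parts
  have hF : ∀ P ∈ (univ : Finset n.Partition), F P ≠ 0 → k ∈ P.parts := fun P _ hP => by
    by_contra hkP
    simp [F, Multiset.count_eq_zero_of_notMem hkP] at hP
  calc ∑ P, F P = ∑ P : {P : n.Partition // k ∈ P.parts}, F P := by
        rw [← sum_filter_of_ne hF]
        exact sum_subtype _ (by simp) F
    _ = ∑ P : (n - k).Partition, F ((Nat.Partition.partitionWithPartEquiv hk hkn).symm P) :=
        Fintype.sum_equiv (Nat.Partition.partitionWithPartEquiv hk hkn) _ _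
          fun P => by rw [Equiv.symm_apply_apply]
    _ = X k * ∑ P : (n - k).Partition, cycleWeight P.parts := by
        rw [mul_sum]
        refine sum_congr rfl fun P _ => ?_
        simp only [F, Nat.Partition.partitionWithPartEquiv_symm_apply_parts,
          Multiset.count_cons_self]
        exact cycleWeight_cons (by omega) P.parts

/-- The cycle index polynomials `q_n`, defined by `q_0 = 1` and
`q_n = (1/n) ∑_{k=1}^n y_k q_{n-k}`, have the closed form
`q_n = ∑_{j_1 + 2 j_2 + ⋯ + n j_n = n} ∏_{k=1}^n (1/j_k!) (y_k / k)^{j_k}`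
(the tuples `(j_1, …, j_n)` with `∑ k j_k = n` being parametrized by the
partitions `P` of `n`, with `j_k` the multiplicity of the part `k`). -/
theorem stmt2 (q : ℕ → MvPolynomial ℕ ℚ) (hq0 : q 0 = 1)
    (hqrec : ∀ n : ℕ, 1 ≤ n →
      q n = C (1 / (n : ℚ)) * ∑ k ∈ Finset.Icc 1 n, X k * q (n - k))
    (n : ℕ) :
    q n = ∑ P : Nat.Partition n, ∏ k ∈ Finset.Icc 1 n,
      C (1 / ((Multiset.count k P.parts).factorial : ℚ)) *
        (C (1 / (k : ℚ)) * X k) ^ Multiset.count k P.parts := by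
  have hsum : ∀ m, q m = ∑ P : m.Partition, cycleWeight P.parts := by
    intro m
    induction m using Nat.strong_induction_on with
    | _ m ih =>
      rcases m.eq_zero_or_pos with rfl | hm
      · simp [hq0, cycleWeight]
      calc q m = C (1 / (m : ℚ)) * ∑ k ∈ Icc 1 m, X k * q (m - k) := hqrec m hm
        _ = C (1 / (m : ℚ)) * ∑ k ∈ Icc 1 m, ∑ P : m.Partition,
              C ((k * P.parts.count k : ℕ) : ℚ) * cycleWeight P.parts := by
            refine congrArg _ (sum_congr rfl fun k hk => ?_)
            obtain ⟨hk1, hkm⟩ := mem_Icc.mp hk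
            rw [ih (m - k) (by omega), sum_count_mul_cycleWeight hk1 hkm]
        _ = C (1 / (m : ℚ)) * ∑ P : m.Partition, C (m : ℚ) * cycleWeight P.parts := by
            rw [sum_comm]
            refine congrArg _ (sum_congr rfl fun P _ => ?_)
            rw [← sum_mul, ← map_sum, ← Nat.cast_sum, P.sum_mul_count_eq]
        _ = ∑ P : m.Partition, cycleWeight P.parts := by
            rw [mul_sum]
            refine sum_congr rfl fun P _ => ?_
            rw [← mul_assoc, ← C_mul, one_div_mul_cancel (by exact_mod_cast hm.ne'), C_1, one_mul]
  rw [hsum n]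
  exact sum_congr rfl fun P _ =>
    (prod_cycleFactor_eq_cycleWeight P.parts_toFinset_subset_Icc).symm
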